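/- arXiv:1908.00477 — 3 statements merged into one kernel-verified Lean document; each statement's English description precedes it below -/
import Mathlib

section
/- For independent pairs (X, X') and (Y, Y') of i.i.d. real-valued random variables with X, X' ~ F and Y, Y' ~ G, all with finite first absolute moments, the energy distance E(X,Y) = 2·E|X − Y| − E|X − X'| − E|Y − Y'| is nonnegative. -/
/-!
Writing `|x - y|` as the length of the interval between `x` and `y` and integrating over `t`
first (Tonelli) gives Cramér's formula
`E|X - Y| = ∫ (F(t) (1 - G(t)) + G(t) (1 - F(t))) dt`, where `F, G` are the distribution
functions. Hence the energy distance is `2 ∫ (F(t) - G(t))² dt ≥ 0`; pointwise in `t` this is the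
rearrangement inequality `a (1 - a) + b (1 - b) ≤ a (1 - b) + b (1 - a)`.
-/

open MeasureTheory ProbabilityTheory Set
open scoped NNReal

lemma measure_mul_measure_compl_add_le {α : Type*} [MeasurableSpace α] (ν ρ : Measure α)
    [IsProbabilityMeasure ν] [IsProbabilityMeasure ρ] {s : Set α} (hs : MeasurableSet s) :
    ν s * ν sᶜ + ρ s * ρ sᶜ ≤ ν s * ρ sᶜ + ρ s * ν sᶜ := by
  rw [prob_compl_eq_one_sub hs, prob_compl_eq_one_sub hs]
  lift ν s to ℝ≥0 using measure_ne_top ν s with a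
  lift ρ s to ℝ≥0 using measure_ne_top ρ s with b
  norm_cast
  rcases le_total a b with h | h
  · exact mul_add_mul_le_mul_add_mul h (tsub_le_tsub_left h 1)
  · exact mul_add_mul_le_mul_add_mul' h (tsub_le_tsub_left h 1)

lemma ENNReal.ofReal_abs_sub (x y : ℝ) :
    ENNReal.ofReal |x - y| = ENNReal.ofReal (y - x) + ENNReal.ofReal (x - y) := by
  rcases le_total x y with h | h
  · simp [abs_of_nonpos (sub_nonpos.2 h), ENNReal.ofReal_of_nonpos (sub_nonpos.2 h)]
  · simp [abs_of_nonneg (sub_nonneg.2 h), ENNReal.ofReal_of_nonpos (sub_nonpos.2 h)]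

lemma lintegral_ofReal_sub_eq_lintegral_measure (π : Measure (ℝ × ℝ)) [SFinite π] :
    ∫⁻ p, ENNReal.ofReal (p.2 - p.1) ∂π = ∫⁻ t, π (Iic t ×ˢ Ioi t) := by
  set S := {q : (ℝ × ℝ) × ℝ | q.1.1 ≤ q.2} ∩ {q | q.2 < q.1.2}
  have hS : MeasurableSet S :=
    (measurableSet_le (by fun_prop) (by fun_prop)).inter
      (measurableSet_lt (by fun_prop) (by fun_prop))
  calc ∫⁻ p, ENNReal.ofReal (p.2 - p.1) ∂π
      = ∫⁻ p, volume (Ico p.1 p.2) ∂π := by simp_rw [Real.volume_Ico]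
    _ = π.prod volume S := (Measure.prod_apply hS).symm
    _ = ∫⁻ t, π (Iic t ×ˢ Ioi t) := by rw [Measure.prod_apply_symm hS]; rfl

lemma lintegral_ofReal_abs_sub_prod (ν ρ : Measure ℝ) [SFinite ν] [SFinite ρ] :
    ∫⁻ p, ENNReal.ofReal |p.1 - p.2| ∂(ν.prod ρ)
      = ∫⁻ t, (ν (Iic t) * ρ (Ioi t) + ρ (Iic t) * ν (Ioi t)) := by
  have hm : Measurable fun t ↦ ν (Iic t) * ρ (Ioi t) :=
    (Monotone.measurable fun _ _ h ↦ measure_mono (Iic_subset_Iic.2 h)).mul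
      (Antitone.measurable fun _ _ h ↦ measure_mono (Ioi_subset_Ioi h))
  calc ∫⁻ p, ENNReal.ofReal |p.1 - p.2| ∂(ν.prod ρ)
      = ∫⁻ p, ENNReal.ofReal (p.2 - p.1) ∂(ν.prod ρ)
          + ∫⁻ p, ENNReal.ofReal (p.2 - p.1) ∂(ρ.prod ν) := by
        simp_rw [ENNReal.ofReal_abs_sub]
        rw [lintegral_add_left (by fun_prop), ← lintegral_prod_swap (μ := ρ)]
        rfl
    _ = (∫⁻ t, ν (Iic t) * ρ (Ioi t)) + ∫⁻ t, ρ (Iic t) * ν (Ioi t) := by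
        simp_rw [lintegral_ofReal_sub_eq_lintegral_measure, Measure.prod_prod]
    _ = _ := (lintegral_add_left hm _).symm

lemma lintegral_ofReal_abs_sub_self_add_le (ν ρ : Measure ℝ)
    [IsProbabilityMeasure ν] [IsProbabilityMeasure ρ] :
    ∫⁻ p, ENNReal.ofReal |p.1 - p.2| ∂(ν.prod ν) + ∫⁻ p, ENNReal.ofReal |p.1 - p.2| ∂(ρ.prod ρ)
      ≤ 2 * ∫⁻ p, ENNReal.ofReal |p.1 - p.2| ∂(ν.prod ρ) := by
  simp_rw [lintegral_ofReal_abs_sub_prod, ← lintegral_const_mul' 2 _ ENNReal.ofNat_ne_top]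
  refine (le_lintegral_add _ _).trans (lintegral_mono fun t ↦ ?_)
  have key := measure_mul_measure_compl_add_le ν ρ (measurableSet_Iic (a := t))
  rw [compl_Iic] at key
  calc ν (Iic t) * ν (Ioi t) + ν (Iic t) * ν (Ioi t)
        + (ρ (Iic t) * ρ (Ioi t) + ρ (Iic t) * ρ (Ioi t))
      = 2 * (ν (Iic t) * ν (Ioi t) + ρ (Iic t) * ρ (Ioi t)) := by ring
    _ ≤ 2 * (ν (Iic t) * ρ (Ioi t) + ρ (Iic t) * ν (Ioi t)) := by gcongr

lemma integrable_abs_sub_prod {ν ρ : Measure ℝ} [IsFiniteMeasure ν] [IsFiniteMeasure ρ]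
    (hν : Integrable id ν) (hρ : Integrable id ρ) :
    Integrable (fun p : ℝ × ℝ ↦ |p.1 - p.2|) (ν.prod ρ) :=
  ((hν.comp_fst ρ).sub (hρ.comp_snd ν)).abs

lemma integral_abs_sub_self_add_le {ν ρ : Measure ℝ}
    [IsProbabilityMeasure ν] [IsProbabilityMeasure ρ]
    (hν : Integrable id ν) (hρ : Integrable id ρ) :
    ∫ p, |p.1 - p.2| ∂(ν.prod ν) + ∫ p, |p.1 - p.2| ∂(ρ.prod ρ)
      ≤ 2 * ∫ p, |p.1 - p.2| ∂(ν.prod ρ) := by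
  have nonneg (π : Measure (ℝ × ℝ)) : 0 ≤ᵐ[π] fun p ↦ |p.1 - p.2| :=
    ae_of_all _ fun _ ↦ abs_nonneg _
  rw [← ENNReal.ofReal_le_ofReal_iff (by positivity),
    ENNReal.ofReal_add (integral_nonneg_of_ae (nonneg _)) (integral_nonneg_of_ae (nonneg _)),
    ENNReal.ofReal_mul zero_le_two,
    ofReal_integral_eq_lintegral_ofReal (integrable_abs_sub_prod hν hν) (nonneg _),
    ofReal_integral_eq_lintegral_ofReal (integrable_abs_sub_prod hρ hρ) (nonneg _),
    ofReal_integral_eq_lintegral_ofReal (integrable_abs_sub_prod hν hρ) (nonneg _)]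
  simpa using lintegral_ofReal_abs_sub_self_add_le ν ρ

lemma ProbabilityTheory.IndepFun.integral_comp_eq_integral_prod {Ω β γ E : Type*}
    [MeasurableSpace Ω] [MeasurableSpace β] [MeasurableSpace γ]
    [NormedAddCommGroup E] [NormedSpace ℝ E]
    {μ : Measure Ω} [IsFiniteMeasure μ] {U : Ω → β} {V : Ω → γ} {f : β × γ → E}
    (hU : AEMeasurable U μ) (hV : AEMeasurable V μ)
    (hf : AEStronglyMeasurable f ((μ.map U).prod (μ.map V))) (h : IndepFun U V μ) :
    ∫ ω, f (U ω, V ω) ∂μ = ∫ p, f p ∂((μ.map U).prod (μ.map V)) := by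
  rw [← h.map_prod_eq_prod_map_map hU hV, integral_map (hU.prodMk hV)]
  rwa [h.map_prod_eq_prod_map_map hU hV]

theorem energy_distance_nonneg_general
    {Ω : Type*} [MeasurableSpace Ω] (μ : Measure Ω) [IsProbabilityMeasure μ]
    (X X' Y Y' : Ω → ℝ) (F G : Measure ℝ)
    (hX : Measurable X) (hX' : Measurable X') (hY : Measurable Y) (hY' : Measurable Y')
    (hXF : μ.map X = F) (hX'F : μ.map X' = F) (hYG : μ.map Y = G) (hY'G : μ.map Y' = G)
    (hindep : iIndepFun ![X, X', Y, Y'] μ)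
    (hiX : Integrable X μ) (hiY : Integrable Y μ) :
    0 ≤ 2 * (∫ ω, |X ω - Y ω| ∂μ)
        - (∫ ω, |X ω - X' ω| ∂μ) - (∫ ω, |Y ω - Y' ω| ∂μ) := by
  have : IsProbabilityMeasure F := hXF ▸ Measure.isProbabilityMeasure_map hX.aemeasurable
  have : IsProbabilityMeasure G := hYG ▸ Measure.isProbabilityMeasure_map hY.aemeasurable
  have law {U V : Ω → ℝ} (hU : Measurable U) (hV : Measurable V) (h : IndepFun U V μ) :
      ∫ ω, |U ω - V ω| ∂μ = ∫ p, |p.1 - p.2| ∂((μ.map U).prod (μ.map V)) :=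
    h.integral_comp_eq_integral_prod (f := fun p ↦ |p.1 - p.2|) hU.aemeasurable hV.aemeasurable
      (by fun_prop)
  have hFint : Integrable id F :=
    hXF ▸ (integrable_map_measure aestronglyMeasurable_id hX.aemeasurable).2 hiX
  have hGint : Integrable id G :=
    hYG ▸ (integrable_map_measure aestronglyMeasurable_id hY.aemeasurable).2 hiY
  rw [law hX hY (hindep.indepFun (i := 0) (j := 2) (by decide)),
    law hX hX' (hindep.indepFun (i := 0) (j := 1) (by decide)),
    law hY hY' (hindep.indepFun (i := 2) (j := 3) (by decide)), hXF, hX'F, hYG, hY'G]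
  linarith [integral_abs_sub_self_add_le hFint hGint]

/-- For independent pairs `(X, X')` and `(Y, Y')` of i.i.d. real-valued
random variables with `X, X' ~ F` and `Y, Y' ~ G`, all integrable, the energy distance
`E(X,Y) = 2 E|X − Y| − E|X − X'| − E|Y − Y'|` is nonnegative. -/
theorem energy_distance_nonneg
    {Ω : Type*} [MeasurableSpace Ω] (μ : Measure Ω) [IsProbabilityMeasure μ]
    (X X' Y Y' : Ω → ℝ) (F G : Measure ℝ)
    (hX : Measurable X) (hX' : Measurable X') (hY : Measurable Y) (hY' : Measurable Y')
    (hXF : μ.map X = F) (hX'F : μ.map X' = F) (hYG : μ.map Y = G) (hY'G : μ.map Y' = G)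
    (hindep : iIndepFun ![X, X', Y, Y'] μ)
    (hiX : Integrable X μ) (hiX' : Integrable X' μ)
    (hiY : Integrable Y μ) (hiY' : Integrable Y' μ) :
    0 ≤ 2 * (∫ ω, |X ω - Y ω| ∂μ)
        - (∫ ω, |X ω - X' ω| ∂μ) - (∫ ω, |Y ω - Y' ω| ∂μ) :=
  energy_distance_nonneg_general μ X X' Y Y' F G hX hX' hY hY' hXF hX'F hYG hY'G hindep hiX hiY
end

section
/- Under H₀ (all K samples drawn i.i.d. from a common distribution with square-integrable kernel), the covariance between the pooled-sample U-statistic U_n and the k-th sample U-statistic U_{n_k} satisfies Cov(U_n, U_{n_k}) = (4/n)σ_{g_k}² + O(1/n²), where σ_{g_k}² = Var(g_k(X)) with g_k(x) = E‖x − X‖. -/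
/-! Write `H_{ij} = ‖X_i − X_j‖`. By bilinearity, `Cov(U_n, U_{n_k})` is an average of the
covariances `Cov(H_p, H_q)` of pairs: these vanish for disjoint pairs, equal
`σ_g² = Var g(X)` for pairs sharing exactly one index, and equal `Var H` for coinciding pairs.
A pair `q` of the subsample coincides with `2` pairs of the pooled sample and shares one index
with `4(n − 2)` of them, so `Cov(U_n, U_{n_k}) = (2 Var H + 4(n − 2) σ_g²) / (n(n − 1))`
exactly, whatever the subsample. Subtracting `4σ_g²/n` leaves
`(2 Var H − 4σ_g²) / (n(n − 1)) = O(1/n²)`. -/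

open MeasureTheory ProbabilityTheory Finset

/-- The U-statistic with kernel `‖x − y‖` over the observations indexed by a finite set
`s`, expressed via the off-diagonal double sum (equal to the usual
`(card choose 2)⁻¹ Σ_{i<j}` form by symmetry of the kernel). -/
noncomputable def ustatOn {d : ℕ} (s : Finset ℕ)
    (X : ℕ → EuclideanSpace ℝ (Fin d)) : ℝ :=
  ((s.card : ℝ) * ((s.card : ℝ) - 1))⁻¹ * ∑ p ∈ s.offDiag, ‖X p.1 - X p.2‖

open Function

theorem sum_offDiag_eq_sum_sum_erase {α M : Type*} [DecidableEq α] [AddCommMonoid M]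
    (t : Finset α) (f : α → α → M) :
    ∑ p ∈ t.offDiag, f p.1 p.2 = ∑ i ∈ t, ∑ j ∈ t.erase i, f i j :=
  sum_finset_product _ _ _ fun p => by simp [mem_offDiag, ne_comm, and_comm, and_left_comm]

theorem sum_offDiag_eq_of_overlap {α R : Type*} [CommRing R]
    {t : Finset α} {k l : α} (hk : k ∈ t) (hl : l ∈ t) (hkl : k ≠ l)
    {F : α → α → R} (hF : ∀ i j, F i j = F j i) {a b : R} (hFkl : F k l = a)
    (hFk : ∀ j ∈ t, j ≠ k → j ≠ l → F k j = b)
    (hFl : ∀ j ∈ t, j ≠ k → j ≠ l → F l j = b)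
    (hF0 : ∀ i ∈ t, ∀ j ∈ t, i ≠ j → i ≠ k → i ≠ l → j ≠ k → j ≠ l → F i j = 0) :
    ∑ p ∈ t.offDiag, F p.1 p.2 = 2 * a + 4 * ((#t : R) - 2) * b := by
  classical
  set r := (t.erase k).erase l
  have hl' : l ∈ t.erase k := mem_erase.2 ⟨hkl.symm, hl⟩
  have mem_r {j : α} : j ∈ r ↔ j ≠ l ∧ j ≠ k ∧ j ∈ t := by simp [r]
  have card_r : (#r : R) = #t - 2 := by
    have : 2 ≤ #t := one_lt_card.2 ⟨k, hk, l, hl, hkl⟩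
    rw [card_erase_of_mem hl', card_erase_of_mem hk, Nat.sub_sub, Nat.cast_sub this]
    norm_num
  have sum_split {f : α → R} : ∑ j ∈ t, f j = f k + f l + ∑ j ∈ r, f j := by
    rw [← add_sum_erase _ _ hk, ← add_sum_erase _ _ hl', add_assoc]
  have sum_r_const {f : α → R} {c : R} (hf : ∀ j ∈ r, f j = c) :
      ∑ j ∈ r, f j = (#t - 2) * c := by
    rw [sum_congr rfl hf, sum_const, nsmul_eq_mul, card_r]
  have row_k : ∑ j ∈ t.erase k, F k j = a + (#t - 2) * b := by
    rw [← add_sum_erase _ _ hl', hFkl, sum_r_const fun j hj =>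
      hFk j (mem_r.1 hj).2.2 (mem_r.1 hj).2.1 (mem_r.1 hj).1]
  have row_l : ∑ j ∈ t.erase l, F l j = a + (#t - 2) * b := by
    rw [← add_sum_erase _ _ (mem_erase.2 ⟨hkl, hk⟩), hF, hFkl, erase_right_comm, sum_r_const
      fun j hj => hFl j (mem_r.1 hj).2.2 (mem_r.1 hj).2.1 (mem_r.1 hj).1]
  have row_r : ∀ i ∈ r, ∑ j ∈ t.erase i, F i j = 2 * b := by
    intro i hi
    obtain ⟨hil, hik, hit⟩ := mem_r.1 hi
    rw [← add_sum_erase _ _ (mem_erase.2 ⟨hik.symm, hk⟩),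
      ← add_sum_erase _ _ (mem_erase.2 ⟨hkl.symm, mem_erase.2 ⟨hil.symm, hl⟩⟩),
      hF i k, hFk i hit hik hil, hF i l, hFl i hit hik hil, sum_eq_zero]
    · ring
    · intro j hj
      simp only [mem_erase] at hj
      exact hF0 i hit j hj.2.2.2 (Ne.symm hj.2.2.1) hik hil hj.2.1 hj.1
  rw [sum_offDiag_eq_sum_sum_erase, sum_split, row_k, row_l, sum_r_const row_r]
  ring

noncomputable def ustat {ι E : Type*} (h : E → E → ℝ) (s : Finset ι) (x : ι → E) : ℝ :=
  ((#s : ℝ) * (#s - 1))⁻¹ * ∑ p ∈ s.offDiag, h (x p.1) (x p.2)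

theorem ustatOn_eq_ustat {d : ℕ} (s : Finset ℕ) (X : ℕ → EuclideanSpace ℝ (Fin d)) :
    ustatOn s X = ustat (fun x y => ‖x - y‖) s X :=
  rfl

section Kernel

variable {E : Type*} [MeasurableSpace E] {ν : Measure E} [IsProbabilityMeasure ν]
  {h : E → E → ℝ}

theorem memLp_two_integral_prod_left (hh : MemLp (uncurry h) 2 (ν.prod ν)) :
    MemLp (fun x => ∫ y, h x y ∂ν) 2 ν := by
  have hsq : Integrable (fun p : E × E => h p.1 p.2 ^ 2) (ν.prod ν) := hh.integrable_sq
  have hmeas : AEStronglyMeasurable (fun x => ∫ y, h x y ∂ν) ν :=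
    hh.aestronglyMeasurable.integral_prod_right'
  refine (memLp_two_iff_integrable_sq hmeas).2 (hsq.integral_prod_left.mono' (hmeas.pow 2) ?_)
  filter_upwards [hsq.prod_right_ae, hh.aestronglyMeasurable.prodMk_left] with x hx
    (hxm : AEStronglyMeasurable (fun y => h x y) ν)
  have jensen := variance_nonneg (fun y => h x y) ν
  rw [variance_eq_sub ((memLp_two_iff_integrable_sq hxm).2 hx)] at jensen
  rw [Real.norm_eq_abs, abs_pow, sq_abs]
  exact sub_nonneg.1 jensen

theorem covariance_shared_arg_eq_variance_integral (hh : MemLp (uncurry h) 2 (ν.prod ν)) :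
    cov[fun p : E × E × E => h p.1 p.2.1, fun p => h p.1 p.2.2; ν.prod (ν.prod ν)]
      = Var[fun x => ∫ y, h x y ∂ν; ν] := by
  have hm₁ : MemLp (fun p : E × E × E => h p.1 p.2.1) 2 (ν.prod (ν.prod ν)) :=
    hh.comp_measurePreserving ((MeasurePreserving.id ν).prod measurePreserving_fst)
  have hm₂ : MemLp (fun p : E × E × E => h p.1 p.2.2) 2 (ν.prod (ν.prod ν)) :=
    hh.comp_measurePreserving ((MeasurePreserving.id ν).prod measurePreserving_snd)
  have mean₁ : ∫ p, h p.1 p.2.1 ∂(ν.prod (ν.prod ν)) = ∫ x, ∫ y, h x y ∂ν ∂ν := by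
    simp [integral_prod _ (hm₁.integrable one_le_two), integral_fun_fst]
  have mean₂ : ∫ p, h p.1 p.2.2 ∂(ν.prod (ν.prod ν)) = ∫ x, ∫ y, h x y ∂ν ∂ν := by
    simp [integral_prod _ (hm₂.integrable one_le_two), integral_fun_snd]
  have second_moment : ∫ p, h p.1 p.2.1 * h p.1 p.2.2 ∂(ν.prod (ν.prod ν))
      = ∫ x, (∫ y, h x y ∂ν) ^ 2 ∂ν := by
    have hint : Integrable (fun p : E × E × E => h p.1 p.2.1 * h p.1 p.2.2)
        (ν.prod (ν.prod ν)) := hm₁.integrable_mul hm₂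
    simp only [integral_prod _ hint, integral_prod_mul, sq]
  rw [covariance_eq_sub hm₁ hm₂, variance_eq_sub (memLp_two_integral_prod_left hh)]
  simp only [Pi.mul_apply, Pi.pow_apply, mean₁, mean₂, second_moment]
  ring

end Kernel

structure IsIIDSample {ι Ω E : Type*} [MeasurableSpace Ω] [MeasurableSpace E]
    (X : ι → Ω → E) (μ : Measure Ω) (ν : Measure E) : Prop where
  aemeasurable : ∀ i, AEMeasurable (X i) μ
  map_eq : ∀ i, μ.map (X i) = ν
  iIndepFun : iIndepFun X μ

namespace IsIIDSample

variable {ι Ω E : Type*} [MeasurableSpace Ω] [MeasurableSpace E] {μ : Measure Ω}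
  [IsProbabilityMeasure μ] {ν : Measure E} {X : ι → Ω → E}

theorem map_prodMk (hX : IsIIDSample X μ ν) {i j : ι} (hij : i ≠ j) :
    μ.map (fun ω => (X i ω, X j ω)) = ν.prod ν := by
  rw [(indepFun_iff_map_prod_eq_prod_map_map (hX.aemeasurable i) (hX.aemeasurable j)).1
    (hX.iIndepFun.indepFun hij), hX.map_eq, hX.map_eq]

theorem map_prodMk_prodMk (hX : IsIIDSample X μ ν) {i j l : ι} (hij : i ≠ j) (hil : i ≠ l)
    (hjl : j ≠ l) :
    μ.map (fun ω => (X i ω, X j ω, X l ω)) = ν.prod (ν.prod ν) := by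
  have hindep : IndepFun (X i) (fun ω => (X j ω, X l ω)) μ :=
    (hX.iIndepFun.indepFun_prodMk₀ hX.aemeasurable j l i hij.symm hil.symm).symm
  rw [(indepFun_iff_map_prod_eq_prod_map_map (hX.aemeasurable i)
    ((hX.aemeasurable j).prodMk (hX.aemeasurable l))).1 hindep, hX.map_eq, hX.map_prodMk hjl]

variable {h : E → E → ℝ}

theorem memLp_kernel (hX : IsIIDSample X μ ν) (hh : MemLp (uncurry h) 2 (ν.prod ν)) {i j : ι}
    (hij : i ≠ j) : MemLp (fun ω => h (X i ω) (X j ω)) 2 μ := by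
  rw [← hX.map_prodMk hij] at hh
  exact hh.comp_of_map ((hX.aemeasurable i).prodMk (hX.aemeasurable j))

theorem covariance_kernel_self (hX : IsIIDSample X μ ν) (hh : MemLp (uncurry h) 2 (ν.prod ν))
    {i j : ι} (hij : i ≠ j) :
    cov[fun ω => h (X i ω) (X j ω), fun ω => h (X i ω) (X j ω); μ]
      = Var[uncurry h; ν.prod ν] := by
  rw [covariance_self (hX.memLp_kernel hh hij).aemeasurable, ← hX.map_prodMk hij, variance_map]
  · rfl
  · rw [hX.map_prodMk hij]; exact hh.aestronglyMeasurable.aemeasurable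
  · exact (hX.aemeasurable i).prodMk (hX.aemeasurable j)

theorem covariance_kernel_of_disjoint (hX : IsIIDSample X μ ν)
    (hh : MemLp (uncurry h) 2 (ν.prod ν)) {i j k l : ι} (hij : i ≠ j) (hkl : k ≠ l)
    (hik : i ≠ k) (hil : i ≠ l) (hjk : j ≠ k) (hjl : j ≠ l) :
    cov[fun ω => h (X i ω) (X j ω), fun ω => h (X k ω) (X l ω); μ] = 0 := by
  have hindep :=
    (hX.iIndepFun.indepFun_prodMk_prodMk₀ hX.aemeasurable i j k l hik hil hjk hjl).comp₀
      ((hX.aemeasurable i).prodMk (hX.aemeasurable j))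
      ((hX.aemeasurable k).prodMk (hX.aemeasurable l)) (φ := uncurry h) (ψ := uncurry h)
      (by rw [hX.map_prodMk hij]; exact hh.aestronglyMeasurable.aemeasurable)
      (by rw [hX.map_prodMk hkl]; exact hh.aestronglyMeasurable.aemeasurable)
  exact hindep.covariance_eq_zero (hX.memLp_kernel hh hij) (hX.memLp_kernel hh hkl)

theorem covariance_kernel_of_shared_index [IsProbabilityMeasure ν] (hX : IsIIDSample X μ ν)
    (hh : MemLp (uncurry h) 2 (ν.prod ν)) {i j l : ι} (hij : i ≠ j) (hil : i ≠ l)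
    (hjl : j ≠ l) :
    cov[fun ω => h (X i ω) (X j ω), fun ω => h (X i ω) (X l ω); μ]
      = Var[fun x => ∫ y, h x y ∂ν; ν] := by
  have hZ := (hX.aemeasurable i).prodMk ((hX.aemeasurable j).prodMk (hX.aemeasurable l))
  have hlaw := hX.map_prodMk_prodMk hij hil hjl
  have hm₁ : AEStronglyMeasurable (fun p : E × E × E => h p.1 p.2.1) (ν.prod (ν.prod ν)) :=
    hh.1.comp_measurePreserving ((MeasurePreserving.id ν).prod measurePreserving_fst)
  have hm₂ : AEStronglyMeasurable (fun p : E × E × E => h p.1 p.2.2) (ν.prod (ν.prod ν)) :=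
    hh.1.comp_measurePreserving ((MeasurePreserving.id ν).prod measurePreserving_snd)
  rw [← covariance_shared_arg_eq_variance_integral hh, ← hlaw,
    covariance_map_fun (hlaw ▸ hm₁) (hlaw ▸ hm₂) hZ]

theorem sum_covariance_kernel_offDiag [IsProbabilityMeasure ν] (hX : IsIIDSample X μ ν)
    (hh : MemLp (uncurry h) 2 (ν.prod ν)) (hsymm : ∀ x y, h x y = h y x)
    {t : Finset ι} {k l : ι} (hk : k ∈ t) (hl : l ∈ t) (hkl : k ≠ l) :
    ∑ p ∈ t.offDiag, cov[fun ω => h (X p.1 ω) (X p.2 ω), fun ω => h (X k ω) (X l ω); μ]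
      = 2 * Var[uncurry h; ν.prod ν]
        + 4 * ((#t : ℝ) - 2) * Var[fun x => ∫ y, h x y ∂ν; ν] := by
  have swap (i j : ι) : (fun ω => h (X i ω) (X j ω)) = fun ω => h (X j ω) (X i ω) :=
    funext fun ω => hsymm _ _
  refine sum_offDiag_eq_of_overlap hk hl hkl (fun i j => by rw [swap])
    (hX.covariance_kernel_self hh hkl)
    (fun j _ hjk hjl => hX.covariance_kernel_of_shared_index hh hjk.symm hkl hjl)
    (fun j _ hjk hjl => ?_)
    (fun i _ j _ hij hik hil hjk hjl =>
      hX.covariance_kernel_of_disjoint hh hij hkl hik hil hjk hjl)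
  rw [swap k l]
  exact hX.covariance_kernel_of_shared_index hh hjl.symm hkl.symm hjk

theorem memLp_ustat (hX : IsIIDSample X μ ν) (hh : MemLp (uncurry h) 2 (ν.prod ν))
    (s : Finset ι) : MemLp (fun ω => ustat h s (X · ω)) 2 μ :=
  (memLp_finsetSum _ fun _ hp => hX.memLp_kernel hh (mem_offDiag.1 hp).2.2).const_mul _

theorem covariance_ustat_of_subset [IsProbabilityMeasure ν] (hX : IsIIDSample X μ ν)
    (hh : MemLp (uncurry h) 2 (ν.prod ν)) (hsymm : ∀ x y, h x y = h y x)
    {s t : Finset ι} (hst : s ⊆ t) (hs : 2 ≤ #s) :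
    cov[fun ω => ustat h t (X · ω), fun ω => ustat h s (X · ω); μ]
      = (2 * Var[uncurry h; ν.prod ν] + 4 * ((#t : ℝ) - 2) * Var[fun x => ∫ y, h x y ∂ν; ν])
        / (#t * (#t - 1)) := by
  have hmem {u : Finset ι} : ∀ p ∈ u.offDiag, MemLp (fun ω => h (X p.1 ω) (X p.2 ω)) 2 μ :=
    fun p hp => hX.memLp_kernel hh (mem_offDiag.1 hp).2.2
  simp only [ustat]
  rw [covariance_const_mul_left, covariance_const_mul_right,
    covariance_fun_sum_fun_sum' hmem hmem, sum_comm,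
    sum_congr rfl fun q hq => hX.sum_covariance_kernel_offDiag hh hsymm
      (hst (mem_offDiag.1 hq).1) (hst (mem_offDiag.1 hq).2.1) (mem_offDiag.1 hq).2.2,
    sum_const, offDiag_card, nsmul_eq_mul, Nat.cast_sub (Nat.le_mul_self _)]
  have hs' : (#s : ℝ) * (#s - 1) ≠ 0 := by
    have : (2 : ℝ) ≤ #s := by exact_mod_cast hs
    exact mul_ne_zero (by positivity) (by linarith)
  rw [Nat.cast_mul, ← mul_sub_one, inv_mul_cancel_left₀ hs', inv_mul_eq_div]

end IsIIDSample

theorem abs_ustat_covariance_sub_leading_le {n a b : ℝ} (hn : 2 ≤ n) :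
    |(2 * a + 4 * (n - 2) * b) / (n * (n - 1)) - 4 / n * b| ≤ 2 * |2 * a - 4 * b| / n ^ 2 := by
  have hpos : 0 < n * (n - 1) := by nlinarith
  have hremainder : (2 * a + 4 * (n - 2) * b) / (n * (n - 1)) - 4 / n * b
      = (2 * a - 4 * b) / (n * (n - 1)) := by
    have : n - 1 ≠ 0 := by linarith
    field_simp
    ring
  rw [hremainder, abs_div, abs_of_pos hpos, div_le_div_iff₀ hpos (by positivity)]
  nlinarith [mul_nonneg (abs_nonneg (2 * a - 4 * b)) (mul_nonneg (by linarith : 0 ≤ n)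
    (by linarith : 0 ≤ n - 2))]

theorem cov_pooled_subsample_ustat_general {d : ℕ}
    {Ω : Type*} [MeasurableSpace Ω] (μ : Measure Ω) [IsProbabilityMeasure μ]
    (X : ℕ → Ω → EuclideanSpace ℝ (Fin d))
    (ν : Measure (EuclideanSpace ℝ (Fin d))) [IsProbabilityMeasure ν]
    (hid : ∀ i, μ.map (X i) = ν)
    (hindep : iIndepFun X μ)
    (hker2 : Integrable (fun p => ‖p.1 - p.2‖ ^ 2) (ν.prod ν))
    (g : EuclideanSpace ℝ (Fin d) → ℝ) (hg : ∀ x, g x = ∫ y, ‖x - y‖ ∂ν)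
    (θ₀ : ℝ) (hθ₀ : θ₀ = ∫ x, g x ∂ν)
    (σg2 : ℝ) (hσg2 : σg2 = ∫ x, (g x - θ₀) ^ 2 ∂ν) :
    ∃ C : ℝ, ∀ n : ℕ, 2 ≤ n → ∀ s : Finset ℕ, s ⊆ Finset.range n → 2 ≤ s.card →
      |((∫ ω, (ustatOn (Finset.range n) (fun i => X i ω)) *
              (ustatOn s (fun i => X i ω)) ∂μ)
          - (∫ ω, ustatOn (Finset.range n) (fun i => X i ω) ∂μ) *
            (∫ ω, ustatOn s (fun i => X i ω) ∂μ))
          - (4 / n) * σg2| ≤ C / n ^ 2 := by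
  have hX : IsIIDSample X μ ν :=
    ⟨fun i => .of_map_ne_zero (hid i ▸ IsProbabilityMeasure.ne_zero ν), hid, hindep⟩
  have hh : MemLp (uncurry fun x y : EuclideanSpace ℝ (Fin d) => ‖x - y‖) 2 (ν.prod ν) :=
    (memLp_two_iff_integrable_sq
      (continuous_fst.sub continuous_snd).norm.aestronglyMeasurable).2 hker2
  obtain rfl : g = fun x => ∫ y, ‖x - y‖ ∂ν := funext hg
  have hσ : σg2 = Var[fun x => ∫ y, ‖x - y‖ ∂ν; ν] := by
    rw [hσg2, hθ₀, variance_eq_integral (memLp_two_integral_prod_left hh).aemeasurable]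
  refine ⟨2 * |2 * Var[uncurry fun x y : EuclideanSpace ℝ (Fin d) => ‖x - y‖; ν.prod ν]
    - 4 * σg2|, fun n hn s hs hs2 => ?_⟩
  have hcov := covariance_eq_sub (hX.memLp_ustat hh (range n)) (hX.memLp_ustat hh s)
  simp only [Pi.mul_apply] at hcov
  simp only [ustatOn_eq_ustat]
  rw [← hcov, hX.covariance_ustat_of_subset hh norm_sub_rev hs hs2, card_range, hσ]
  exact abs_ustat_covariance_sub_leading_le (by exact_mod_cast hn)

/-- Under `H₀` (all observations i.i.d. from a common distribution
with square-integrable kernel), the covariance of the pooled U-statistic `U_n` and a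
subsample U-statistic `U_{n_k}` satisfies `Cov(U_n, U_{n_k}) = (4/n) σ_g² + O(1/n²)`,
where `σ_g² = Var(g(X))` with `g(x) = E‖x − X‖`. -/
theorem cov_pooled_subsample_ustat {d : ℕ}
    {Ω : Type*} [MeasurableSpace Ω] (μ : Measure Ω) [IsProbabilityMeasure μ]
    (X : ℕ → Ω → EuclideanSpace ℝ (Fin d)) (hmeas : ∀ i, Measurable (X i))
    (ν : Measure (EuclideanSpace ℝ (Fin d))) [IsProbabilityMeasure ν]
    (hid : ∀ i, μ.map (X i) = ν)
    (hindep : iIndepFun X μ)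
    (hker2 : Integrable (fun p => ‖p.1 - p.2‖ ^ 2) (ν.prod ν))
    (g : EuclideanSpace ℝ (Fin d) → ℝ) (hg : ∀ x, g x = ∫ y, ‖x - y‖ ∂ν)
    (θ₀ : ℝ) (hθ₀ : θ₀ = ∫ x, g x ∂ν)
    (σg2 : ℝ) (hσg2 : σg2 = ∫ x, (g x - θ₀) ^ 2 ∂ν) :
    ∃ C : ℝ, ∀ n : ℕ, 2 ≤ n → ∀ s : Finset ℕ, s ⊆ Finset.range n → 2 ≤ s.card →
      |((∫ ω, (ustatOn (Finset.range n) (fun i => X i ω)) *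
              (ustatOn s (fun i => X i ω)) ∂μ)
          - (∫ ω, ustatOn (Finset.range n) (fun i => X i ω) ∂μ) *
            (∫ ω, ustatOn s (fun i => X i ω) ∂μ))
          - (4 / n) * σg2| ≤ C / n ^ 2 :=
  cov_pooled_subsample_ustat_general μ X ν hid hindep hker2 g hg θ₀ hθ₀ σg2 hσg2
end

section
/- Let α₁,...,α_K > 0 with Σ_{k=1}^K α_k = 1. Define the (K+1)×(K+1) matrices A and W₀ (indices 0,...,K) by: A[0,0] = 1/2, A[k,k] = 1/α_k − 1/2 for k ≥ 1, and A[i,j] = −1/2 for i ≠ j; W₀ = diag(1, α₁,...,α_K). Then Aᵀ W₀ A = A. -/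
/-!
Write `W₀ = diag w` with `w = (1, α₁, …, α_K)` and `J` for the all-ones matrix. Then
`A = W₀⁻¹ - J / 2` is symmetric, and expanding `(W₀⁻¹ - c J) W₀ (W₀⁻¹ - c J)` with
`J W₀ J = (∑ w) J` gives `W₀⁻¹ - (2c - c² ∑ w) J`. Since `∑ w = 1 + ∑ α_k = 2`, the coefficient
for `c = 1/2` is again `1/2`.
-/

open Finset Matrix

theorem Fin.sum_univ_val_add_one_eq_sum_Icc {M : Type*} [AddCommMonoid M] (K : ℕ) (a : ℕ → M) :
    ∑ i : Fin K, a (i.val + 1) = ∑ k ∈ Icc 1 K, a k := by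
  rw [Fin.sum_univ_eq_sum_range (fun i => a (i + 1)), range_eq_Ico, sum_Ico_add', zero_add,
    Ico_add_one_right_eq_Icc]

namespace Matrix

variable {n R : Type*} [Fintype n] [DecidableEq n] [Field R]

theorem const_mul_diagonal_mul_const (w : n → R) (c : R) :
    ((of fun _ _ => c : Matrix n n R) * diagonal w * of fun _ _ => c) =
      of fun _ _ => c ^ 2 * ∑ k, w k := by
  ext i j
  rw [mul_apply]
  simp only [mul_diagonal, of_apply, Finset.mul_sum]
  exact Finset.sum_congr rfl fun k _ => by ring

theorem diagonal_inv_sub_const_mul_diagonal_mul (w : n → R) (hw : ∀ i, w i ≠ 0) (c : R) :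
    (diagonal w⁻¹ - of fun _ _ => c) * diagonal w * (diagonal w⁻¹ - of fun _ _ => c) =
      diagonal w⁻¹ - of fun _ _ => 2 * c - c ^ 2 * ∑ k, w k := by
  have hinv_mul : diagonal w⁻¹ * diagonal w = 1 := by
    rw [diagonal_mul_diagonal, ← diagonal_one]
    exact congrArg diagonal (funext fun i => inv_mul_cancel₀ (hw i))
  have hmul_inv : diagonal w * diagonal w⁻¹ = 1 := by
    rw [diagonal_mul_diagonal, ← diagonal_one]
    exact congrArg diagonal (funext fun i => mul_inv_cancel₀ (hw i))
  rw [sub_mul, sub_mul, mul_sub, mul_sub, const_mul_diagonal_mul_const, hinv_mul,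
    Matrix.mul_assoc, hmul_inv, Matrix.mul_one, Matrix.one_mul, Matrix.one_mul]
  ext i j
  simp only [sub_apply, of_apply]
  ring

end Matrix

theorem jel_A_W0_identity_general (K : ℕ) (a : ℕ → ℝ)
    (ha : ∀ k ∈ Finset.Icc 1 K, 0 < a k) (hsum : ∑ k ∈ Finset.Icc 1 K, a k = 1)
    (A W₀ : Matrix (Fin (K + 1)) (Fin (K + 1)) ℝ)
    (hA : ∀ i j : Fin (K + 1), A i j =
      if i = j then (if i.val = 0 then (1 / 2 : ℝ) else (a i.val)⁻¹ - 1 / 2)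
      else (-1 / 2 : ℝ))
    (hW₀ : ∀ i j : Fin (K + 1), W₀ i j =
      if i = j then (if i.val = 0 then (1 : ℝ) else a i.val) else 0) :
    A.transpose * W₀ * A = A := by
  set w : Fin (K + 1) → ℝ := fun i => if i.val = 0 then 1 else a i.val
  have hw_ne : ∀ i, w i ≠ 0 := by
    refine Fin.cases (by simp [w]) fun k => ?_
    simpa [w] using (ha (k.val + 1) (mem_Icc.2 ⟨by omega, by omega⟩)).ne'
  have hw_sum : ∑ i, w i = 2 := by
    simp only [w, Fin.sum_univ_succ, Fin.val_zero, Fin.val_succ, if_pos, Nat.add_one_ne_zero,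
      if_false, Fin.sum_univ_val_add_one_eq_sum_Icc, hsum]
    norm_num
  have hW : W₀ = diagonal w := by
    ext i j
    rw [hW₀, diagonal_apply]
  have hA' : A = diagonal w⁻¹ - of fun _ _ => 1 / 2 := by
    ext i j
    rw [hA, Matrix.sub_apply, diagonal_apply, of_apply]
    by_cases hij : i = j
    · simp only [hij, if_true, Pi.inv_apply, w]
      split_ifs <;> norm_num
    · simp only [hij, if_false]
      ring
  have hA_symm : Aᵀ = A := by
    rw [hA', transpose_sub, diagonal_transpose]
    rfl
  rw [hA_symm, hW, hA', diagonal_inv_sub_const_mul_diagonal_mul w hw_ne, hw_sum]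
  norm_num

/-- With `A` the symmetric `(K+1)×(K+1)` matrix with diagonal
`(1/2, α₁⁻¹ − 1/2, ..., α_K⁻¹ − 1/2)` and off-diagonal entries `−1/2`, and
`W₀ = diag(1, α₁, ..., α_K)`, one has `Aᵀ W₀ A = A`. -/
theorem jel_A_W0_identity (K : ℕ) (hK : 1 ≤ K) (a : ℕ → ℝ)
    (ha : ∀ k ∈ Finset.Icc 1 K, 0 < a k) (hsum : ∑ k ∈ Finset.Icc 1 K, a k = 1)
    (A W₀ : Matrix (Fin (K + 1)) (Fin (K + 1)) ℝ)
    (hA : ∀ i j : Fin (K + 1), A i j =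
      if i = j then (if i.val = 0 then (1 / 2 : ℝ) else (a i.val)⁻¹ - 1 / 2)
      else (-1 / 2 : ℝ))
    (hW₀ : ∀ i j : Fin (K + 1), W₀ i j =
      if i = j then (if i.val = 0 then (1 : ℝ) else a i.val) else 0) :
    A.transpose * W₀ * A = A :=
  jel_A_W0_identity_general K a ha hsum A W₀ hA hW₀
end
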